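/- arXiv:0807.1416 — 2 statements merged into one kernel-verified Lean document; each statement's English description precedes it below -/
import Mathlib

section
/- Monotone Lipschitz approximation of a continuous generator: fix T > 0, integers n, d ≥ 1 and compact metric spaces A and B. Let f̃ : [0,T]×ℝⁿ×ℝ×ℝ^d×A×B → ℝ be bounded and continuous, and suppose there is R > 0 such that f̃(t,x,y,z,α,β) = 0 whenever |y| > R. Then there exists a sequence (f^p)_{p≥1} of bounded continuous functions [0,T]×ℝⁿ×ℝ×ℝ^d×A×B → ℝ such that: (a) each f^p is Lipschitz in (x,y,z) uniformly with respect to (t,α,β), i.e. there is L_p > 0 with |f^p(t,x,y,z,α,β) − f^p(t,x',y',z',α,β)| ≤ L_p(|x−x'| + |y−y'| + |z−z'|) for all arguments; (b) f^{p+1} ≤ f^p and f^p ≥ f̃ pointwise; (c) f^p converges to f̃ uniformly on compact subsets of [0,T]×ℝⁿ×ℝ×ℝ^d×A×B. -/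
open Set Filter Topology

noncomputable section

/-- Euclidean space `ℝⁿ`. -/
abbrev En (n : ℕ) : Type := EuclideanSpace ℝ (Fin n)

/-- Frobenius norm of a matrix. -/
noncomputable def frobNorm {n d : ℕ} (M : Matrix (Fin n) (Fin d) ℝ) : ℝ :=
  Real.sqrt (∑ i, ∑ j, (M i j) ^ 2)

/-- Row vector `q` multiplied by the matrix `M`. -/
def rowMul {n d : ℕ} (q : En n) (M : Matrix (Fin n) (Fin d) ℝ) : En d :=
  WithLp.toLp 2 (fun j => ∑ i, q i * M i j)

/-- The lower Hamiltonian `H⁻ = sup_α inf_β [½Tr(σσᵀX) + ⟨b,q⟩ + f(t,x,r,qσ,α,β)]`,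
for a generic generator `f`. -/
noncomputable def Hinf {n d : ℕ} (A B : Type)
    (b : ℝ → En n → A → B → En n)
    (σm : ℝ → En n → A → B → Matrix (Fin n) (Fin d) ℝ)
    (f : ℝ → En n → ℝ → En d → A → B → ℝ)
    (t : ℝ) (x : En n) (r : ℝ) (q : En n) (X : Matrix (Fin n) (Fin n) ℝ) : ℝ :=
  ⨆ α : A, ⨅ β : B,
    (1 / 2) * Matrix.trace (σm t x α β * (σm t x α β).transpose * X)
      + (inner ℝ (b t x α β) q : ℝ)
      + f t x r (rowMul q (σm t x α β)) α β

/-- The upper Hamiltonian `H⁺ = inf_β sup_α [...]`. -/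
noncomputable def Hsup {n d : ℕ} (A B : Type)
    (b : ℝ → En n → A → B → En n)
    (σm : ℝ → En n → A → B → Matrix (Fin n) (Fin d) ℝ)
    (f : ℝ → En n → ℝ → En d → A → B → ℝ)
    (t : ℝ) (x : En n) (r : ℝ) (q : En n) (X : Matrix (Fin n) (Fin n) ℝ) : ℝ :=
  ⨅ β : B, ⨆ α : A,
    (1 / 2) * Matrix.trace (σm t x α β * (σm t x α β).transpose * X)
      + (inner ℝ (b t x α β) q : ℝ)
      + f t x r (rowMul q (σm t x α β)) α β

/-- `φ` is of class `C^{1,2}` on `[0,T)×ℝⁿ`, with time derivative `φt`,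
spatial gradient `Dφ` and spatial Hessian `D2φ`, all continuous on `[0,T)×ℝⁿ`. -/
structure IsC12 (T : ℝ) {n : ℕ} (φ φt : ℝ → En n → ℝ) (Dφ : ℝ → En n → En n)
    (D2φ : ℝ → En n → Matrix (Fin n) (Fin n) ℝ) : Prop where
  cont : ContinuousOn (fun p : ℝ × En n => φ p.1 p.2) (Ico 0 T ×ˢ univ)
  cont_t : ContinuousOn (fun p : ℝ × En n => φt p.1 p.2) (Ico 0 T ×ˢ univ)
  cont_D : ContinuousOn (fun p : ℝ × En n => Dφ p.1 p.2) (Ico 0 T ×ˢ univ)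
  cont_D2 : ContinuousOn (fun p : ℝ × En n => D2φ p.1 p.2) (Ico 0 T ×ˢ univ)
  deriv_t : ∀ t ∈ Ico (0 : ℝ) T, ∀ x : En n,
    HasDerivWithinAt (fun s => φ s x) (φt t x) (Ico 0 T) t
  grad_x : ∀ t ∈ Ico (0 : ℝ) T, ∀ x : En n, HasGradientAt (fun y => φ t y) (Dφ t x) x
  hess_x : ∀ t ∈ Ico (0 : ℝ) T, ∀ x : En n,
    HasFDerivAt (fun y => Dφ t y)
      (LinearMap.toContinuousLinearMap (Matrix.toEuclideanLin (D2φ t x))) x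

/-- `u` is a viscosity subsolution of the obstacle equation
`min{u-ℓ, max{-∂u/∂t - H(t,x,u,Du,D²u), u-ℓ'}} = 0` on `[0,T)×ℝⁿ`, `u(T,·) = G`. -/
def IsSubsolution (T : ℝ) {n : ℕ}
    (H : ℝ → En n → ℝ → En n → Matrix (Fin n) (Fin n) ℝ → ℝ)
    (ℓ ℓ' : ℝ → En n → ℝ) (G : En n → ℝ) (u : ℝ → En n → ℝ) : Prop :=
  UpperSemicontinuousOn (fun p : ℝ × En n => u p.1 p.2) (Icc 0 T ×ˢ univ)
  ∧ (∀ x : En n, u T x ≤ G x)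
  ∧ ∀ (φ φt : ℝ → En n → ℝ) (Dφ : ℝ → En n → En n)
      (D2φ : ℝ → En n → Matrix (Fin n) (Fin n) ℝ),
      IsC12 T φ φt Dφ D2φ →
      ∀ t ∈ Ico (0 : ℝ) T, ∀ x : En n,
        (∀ s ∈ Ico (0 : ℝ) T, ∀ y : En n, u s y - φ s y ≤ u t x - φ t x) →
        min (u t x - ℓ t x)
          (max (-(φt t x) - H t x (u t x) (Dφ t x) (D2φ t x)) (u t x - ℓ' t x)) ≤ 0

/-- `u` is a viscosity supersolution of the obstacle equation. -/
def IsSupersolution (T : ℝ) {n : ℕ}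
    (H : ℝ → En n → ℝ → En n → Matrix (Fin n) (Fin n) ℝ → ℝ)
    (ℓ ℓ' : ℝ → En n → ℝ) (G : En n → ℝ) (u : ℝ → En n → ℝ) : Prop :=
  LowerSemicontinuousOn (fun p : ℝ × En n => u p.1 p.2) (Icc 0 T ×ˢ univ)
  ∧ (∀ x : En n, G x ≤ u T x)
  ∧ ∀ (φ φt : ℝ → En n → ℝ) (Dφ : ℝ → En n → En n)
      (D2φ : ℝ → En n → Matrix (Fin n) (Fin n) ℝ),
      IsC12 T φ φt Dφ D2φ →
      ∀ t ∈ Ico (0 : ℝ) T, ∀ x : En n,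
        (∀ s ∈ Ico (0 : ℝ) T, ∀ y : En n, u t x - φ t x ≤ u s y - φ s y) →
        0 ≤ min (u t x - ℓ t x)
          (max (-(φt t x) - H t x (u t x) (Dφ t x) (D2φ t x)) (u t x - ℓ' t x))

/-- Hypothesis (H1): continuity of `b`, `σ` on `[0,T]×ℝⁿ×A×B` and uniform
Lipschitz continuity in `x`. -/
def HypH1 {n d : ℕ} (T : ℝ) (A B : Type) [TopologicalSpace A] [TopologicalSpace B]
    (b : ℝ → En n → A → B → En n)
    (σm : ℝ → En n → A → B → Matrix (Fin n) (Fin d) ℝ) : Prop :=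
  ContinuousOn (fun p : ℝ × En n × A × B => b p.1 p.2.1 p.2.2.1 p.2.2.2)
      (Icc 0 T ×ˢ (univ : Set (En n × A × B)))
  ∧ ContinuousOn (fun p : ℝ × En n × A × B => σm p.1 p.2.1 p.2.2.1 p.2.2.2)
      (Icc 0 T ×ˢ (univ : Set (En n × A × B)))
  ∧ ∃ CL > (0 : ℝ), ∀ t ∈ Icc (0 : ℝ) T, ∀ (x x' : En n) (α : A) (β : B),
      ‖b t x α β - b t x' α β‖ + frobNorm (σm t x α β - σm t x' α β) ≤ CL * ‖x - x'‖

/-- Hypothesis (H2): `g`, `h`, `h'` continuous and bounded, `h < h'`,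
`h(T,·) ≤ g ≤ h'(T,·)`; `F` continuous with quadratic growth in `z`
with constant `C`. -/
def HypH2 {n d : ℕ} (T C : ℝ) (A B : Type) [TopologicalSpace A] [TopologicalSpace B]
    (g : En n → ℝ) (h h' : ℝ → En n → ℝ)
    (F : ℝ → En n → ℝ → En d → A → B → ℝ) : Prop :=
  Continuous g ∧ (∃ M, ∀ x : En n, |g x| ≤ M)
  ∧ ContinuousOn (fun p : ℝ × En n => h p.1 p.2) (Icc 0 T ×ˢ univ)
  ∧ ContinuousOn (fun p : ℝ × En n => h' p.1 p.2) (Icc 0 T ×ˢ univ)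
  ∧ (∃ M, ∀ t ∈ Icc (0 : ℝ) T, ∀ x : En n, |h t x| ≤ M ∧ |h' t x| ≤ M)
  ∧ (∀ t ∈ Icc (0 : ℝ) T, ∀ x : En n, h t x < h' t x)
  ∧ (∀ x : En n, h T x ≤ g x ∧ g x ≤ h' T x)
  ∧ ContinuousOn
      (fun p : ℝ × En n × ℝ × En d × A × B =>
        F p.1 p.2.1 p.2.2.1 p.2.2.2.1 p.2.2.2.2.1 p.2.2.2.2.2)
      (Icc 0 T ×ˢ (univ : Set (En n × ℝ × En d × A × B)))
  ∧ 0 < C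
  ∧ ∀ t ∈ Icc (0 : ℝ) T, ∀ (x : En n) (y : ℝ) (z : En d) (α : A) (β : B),
      |F t x y z α β| ≤ C * (1 + ‖z‖ ^ 2)

/-- Hypothesis (H3): `F` is differentiable in `(x,y,z)`, with
`|∂F/∂x|, |∂F/∂z| ≤ C(1+|z|²)` and `∂F/∂y ≤ C_ε + ε|z|²` for every `ε > 0`. -/
def HypH3 {n d : ℕ} (T C : ℝ) (A B : Type)
    (F : ℝ → En n → ℝ → En d → A → B → ℝ) : Prop :=
  ∃ (Fx : ℝ → En n → ℝ → En d → A → B → En n)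
    (Fy : ℝ → En n → ℝ → En d → A → B → ℝ)
    (Fz : ℝ → En n → ℝ → En d → A → B → En d),
    (∀ t ∈ Icc (0 : ℝ) T, ∀ (x : En n) (y : ℝ) (z : En d) (α : A) (β : B),
      HasGradientAt (fun x' => F t x' y z α β) (Fx t x y z α β) x
      ∧ HasDerivAt (fun y' => F t x y' z α β) (Fy t x y z α β) y
      ∧ HasGradientAt (fun z' => F t x y z' α β) (Fz t x y z α β) z
      ∧ ‖Fx t x y z α β‖ ≤ C * (1 + ‖z‖ ^ 2)
      ∧ ‖Fz t x y z α β‖ ≤ C * (1 + ‖z‖ ^ 2))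
    ∧ ∀ ε > (0 : ℝ), ∃ Cε > (0 : ℝ), ∀ t ∈ Icc (0 : ℝ) T,
        ∀ (x : En n) (y : ℝ) (z : En d) (α : A) (β : B),
          Fy t x y z α β ≤ Cε + ε * ‖z‖ ^ 2

/-- The function `ρ(x) = (1/λ) ln((e^{λγx}+1)/γ)`. -/
noncomputable def rho (γ lam : ℝ) (x : ℝ) : ℝ :=
  (1 / lam) * Real.log ((Real.exp (lam * γ * x) + 1) / γ)

/-- `ρ'`. -/
noncomputable def rho' (γ lam : ℝ) : ℝ → ℝ := deriv (rho γ lam)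

/-- `ρ''`. -/
noncomputable def rho'' (γ lam : ℝ) : ℝ → ℝ := deriv (rho' γ lam)

/-- The transformed generator
`F̄(t,x,ū,z̄) = (ρ''(ū)/ρ'(ū))|z̄|² − Kρ(ū)/ρ'(ū) + (e^{Kt}/ρ'(ū)) F(t,x,e^{−Kt}ρ(ū)+C̃,e^{−Kt}ρ'(ū)z̄)`. -/
noncomputable def Fbar {n d : ℕ} {A B : Type} (γ lam K Ct : ℝ)
    (F : ℝ → En n → ℝ → En d → A → B → ℝ)
    (t : ℝ) (x : En n) (ub : ℝ) (zb : En d) (α : A) (β : B) : ℝ :=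
  (rho'' γ lam ub / rho' γ lam ub) * ‖zb‖ ^ 2
    - K * rho γ lam ub / rho' γ lam ub
    + (Real.exp (K * t) / rho' γ lam ub)
      * F t x (Real.exp (-(K * t)) * rho γ lam ub + Ct)
          ((Real.exp (-(K * t)) * rho' γ lam ub) • zb) α β

/-- The change of variable `ū(t,x) = ρ⁻¹(e^{Kt}(u(t,x) − C̃))`. -/
noncomputable def transf {n : ℕ} (γ lam K Ct : ℝ) (u : ℝ → En n → ℝ) : ℝ → En n → ℝ :=
  fun t x => Function.invFun (rho γ lam) (Real.exp (K * t) * (u t x - Ct))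

/-- `(p,q,X)` belongs to the second-order parabolic superjet `𝒫^{2,+}u(t₀,x₀)`. -/
def ParabSuperjet (T : ℝ) {n : ℕ} (u : ℝ → En n → ℝ) (t0 : ℝ) (x0 : En n)
    (p : ℝ) (q : En n) (X : Matrix (Fin n) (Fin n) ℝ) : Prop :=
  X.IsSymm ∧
  ∀ ε > (0 : ℝ), ∃ δ > (0 : ℝ), ∀ t ∈ Ico (0 : ℝ) T, ∀ x : En n,
    |t - t0| < δ → ‖x - x0‖ < δ →
    u t x ≤ u t0 x0 + p * (t - t0) + (inner ℝ q (x - x0) : ℝ)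
      + (1 / 2) * (inner ℝ (Matrix.toEuclideanLin X (x - x0)) (x - x0) : ℝ)
      + ε * (|t - t0| + ‖x - x0‖ ^ 2)

/-- The parabolic subjet `𝒫^{2,−}u = −𝒫^{2,+}(−u)`. -/
def ParabSubjet (T : ℝ) {n : ℕ} (u : ℝ → En n → ℝ) (t0 : ℝ) (x0 : En n)
    (p : ℝ) (q : En n) (X : Matrix (Fin n) (Fin n) ℝ) : Prop :=
  ParabSuperjet T (fun t x => -(u t x)) t0 x0 (-p) (-q) (-X)

/-- The closure `𝒫̄^{2,+}u(t₀,x₀)` of the parabolic superjet. -/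
def ClosedParabSuperjet (T : ℝ) {n : ℕ} (u : ℝ → En n → ℝ) (t0 : ℝ) (x0 : En n)
    (p : ℝ) (q : En n) (X : Matrix (Fin n) (Fin n) ℝ) : Prop :=
  ∃ (tk : ℕ → ℝ) (xk : ℕ → En n) (pk : ℕ → ℝ) (qk : ℕ → En n)
    (Xk : ℕ → Matrix (Fin n) (Fin n) ℝ),
    (∀ k, tk k ∈ Ico (0 : ℝ) T ∧ ParabSuperjet T u (tk k) (xk k) (pk k) (qk k) (Xk k))
    ∧ Tendsto tk atTop (nhds t0) ∧ Tendsto xk atTop (nhds x0)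
    ∧ Tendsto (fun k => u (tk k) (xk k)) atTop (nhds (u t0 x0))
    ∧ Tendsto pk atTop (nhds p) ∧ Tendsto qk atTop (nhds q)
    ∧ Tendsto Xk atTop (nhds X)

/-- The doubled and penalized function
`Ψ_{ε,η}(t,x,y) = ū(t,x) − v̄(t,y) − |x−y|²/ε² − η(|x|²+|y|²)`. -/
noncomputable def Psi {n : ℕ} (ub vb : ℝ → En n → ℝ) (ε η : ℝ)
    (t : ℝ) (x y : En n) : ℝ :=
  ub t x - vb t y - ‖x - y‖ ^ 2 / ε ^ 2 - η * (‖x‖ ^ 2 + ‖y‖ ^ 2)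

/-- The exponentially transformed generator
`f(t,x,y,z) = 2Cy[F(t,x,(ln y)/(2C), z/(2Cy)) − |z|²/(4Cy²)]` for `y > 0`, `0` otherwise. -/
noncomputable def expGen {n d : ℕ} {A B : Type} (C : ℝ)
    (F : ℝ → En n → ℝ → En d → A → B → ℝ)
    (t : ℝ) (x : En n) (y : ℝ) (z : En d) (α : A) (β : B) : ℝ :=
  if 0 < y then
    2 * C * y * (F t x (Real.log y / (2 * C)) ((1 / (2 * C * y)) • z) α β
      - ‖z‖ ^ 2 / (4 * C * y ^ 2))
  else 0

/-! The approximants are the sup-convolutions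
`f^p(q) = sup_{q' ∈ S} (f̃(q') - (p+1) d(q, q'))` over `S = [0,T] × ℝⁿ × ℝ × ℝ^d × A × B`,
with `d` the product (max) metric. Each is `(p+1)`-Lipschitz, at least `f̃`, at most `sup f̃`,
and decreasing in `p`; continuity of `f̃` gives pointwise convergence to `f̃` on `S`, and
Dini's theorem upgrades it to uniform convergence on compact sets. Off `S` we set `f^p = f̃`. -/

open scoped NNReal

lemma TendstoUniformlyOn.piecewise_of_inter {ι α β : Type*} [UniformSpace β] {G : ι → α → β}
    {f : α → β} {l : Filter ι} {s t : Set α} [∀ x, Decidable (x ∈ t)]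
    (h : TendstoUniformlyOn G f l (s ∩ t)) :
    TendstoUniformlyOn (fun i => t.piecewise (G i) f) f l s := by
  intro u hu
  filter_upwards [h u hu] with i hi x hx
  by_cases hxt : x ∈ t
  · simpa [hxt] using hi x ⟨hx, hxt⟩
  · simpa [hxt] using refl_mem_uniformity hu

section SupConvolution

variable {X : Type*} [PseudoMetricSpace X] {s : Set X} {F : X → ℝ}

def supConv (s : Set X) (F : X → ℝ) (K : ℝ≥0) (x : X) : ℝ :=
  ⨆ y : s, F y - K * dist x y

lemma supConv_bddAbove (hF : BddAbove (F '' s)) (K : ℝ≥0) (x : X) :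
    BddAbove (range fun y : s => F y - K * dist x y) := by
  obtain ⟨M, hM⟩ := hF
  refine ⟨M, ?_⟩
  rintro _ ⟨y, rfl⟩
  have hFy : F y ≤ M := hM (mem_image_of_mem F y.2)
  have : 0 ≤ (K : ℝ) * dist x y := by positivity
  linarith

lemma le_supConv (hF : BddAbove (F '' s)) (K : ℝ≥0) {x : X} (hx : x ∈ s) :
    F x ≤ supConv s F K x := by
  simpa [supConv] using le_ciSup (supConv_bddAbove hF K x) ⟨x, hx⟩

lemma supConv_le {M : ℝ} (hs : s.Nonempty) (hM : ∀ y ∈ s, F y ≤ M) (K : ℝ≥0) (x : X) :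
    supConv s F K x ≤ M := by
  have : Nonempty s := hs.to_subtype
  refine ciSup_le fun y => ?_
  have : 0 ≤ (K : ℝ) * dist x y := by positivity
  linarith [hM y y.2]

lemma abs_supConv_le {M : ℝ} (hM : ∀ y ∈ s, |F y| ≤ M) (K : ℝ≥0) {x : X} (hx : x ∈ s) :
    |supConv s F K x| ≤ M := by
  have hFM : ∀ y ∈ s, F y ≤ M := fun y hy => (abs_le.1 (hM y hy)).2
  have hF : BddAbove (F '' s) := ⟨M, forall_mem_image.2 hFM⟩
  refine abs_le.2 ⟨?_, supConv_le ⟨x, hx⟩ hFM K x⟩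
  linarith [(abs_le.1 (hM x hx)).1, le_supConv hF K hx]

lemma supConv_le_supConv_add (hF : BddAbove (F '' s)) (K : ℝ≥0) (x x' : X) :
    supConv s F K x ≤ supConv s F K x' + K * dist x x' := by
  rcases isEmpty_or_nonempty s with hs | hs
  · simp only [supConv, Real.iSup_of_isEmpty, zero_add]
    positivity
  refine ciSup_le fun y => ?_
  have htri : dist x' y ≤ dist x x' + dist x y := by
    simpa only [dist_comm x' x] using dist_triangle x' x y
  calc F y - K * dist x y ≤ F y - K * dist x' y + K * dist x x' := by
        nlinarith [K.coe_nonneg]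
    _ ≤ supConv s F K x' + K * dist x x' := by
        gcongr
        exact le_ciSup (supConv_bddAbove hF K x') y

lemma lipschitzWith_supConv (hF : BddAbove (F '' s)) (K : ℝ≥0) :
    LipschitzWith K (supConv s F K) :=
  LipschitzWith.of_le_add_mul K (supConv_le_supConv_add hF K)

lemma supConv_antitone (hF : BddAbove (F '' s)) (x : X) :
    Antitone fun K => supConv s F K x :=
  fun K _ hK => ciSup_mono (supConv_bddAbove hF K x) fun y => by gcongr

/-- Near `x` the penalty is small and `F` is close to `F x` by continuity; far from `x` the
penalty `K δ` eventually exceeds the oscillation `M - F x`. -/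
lemma tendsto_supConv (hF : BddAbove (F '' s)) {x : X} (hx : x ∈ s)
    (hFx : ContinuousWithinAt F s x) :
    Tendsto (fun K => supConv s F K x) atTop (𝓝 (F x)) := by
  obtain ⟨M, hM⟩ := id hF
  refine tendsto_order.2 ⟨fun a ha => Eventually.of_forall fun K =>
    ha.trans_le (le_supConv hF K hx), fun b hb => ?_⟩
  have : Nonempty s := ⟨⟨x, hx⟩⟩
  obtain ⟨c, hxc, hcb⟩ := exists_between hb
  obtain ⟨δ, hδ, hnear⟩ := Metric.continuousWithinAt_iff.1 hFx (c - F x) (by linarith)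
  filter_upwards [eventually_ge_atTop ((M - F x) / δ).toNNReal] with K hK
  have hKδ : M - F x ≤ K * δ := by
    rw [← div_le_iff₀ hδ]; exact Real.toNNReal_le_iff_le_coe.1 hK
  refine lt_of_le_of_lt (ciSup_le fun y => ?_) hcb
  by_cases hy : dist (y : X) x < δ
  · have := (abs_lt.1 (hnear y.2 hy)).2
    have : 0 ≤ (K : ℝ) * dist x y := by positivity
    linarith
  · have hFy : F y ≤ M := hM (mem_image_of_mem F y.2)
    have : (K : ℝ) * δ ≤ K * dist x y := by
      rw [dist_comm]; exact mul_le_mul_of_nonneg_left (not_lt.1 hy) K.coe_nonneg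
    linarith

lemma tendstoUniformlyOn_piecewise_supConv [∀ x, Decidable (x ∈ s)] (hs : IsClosed s)
    (hF : BddAbove (F '' s)) (hFc : ContinuousOn F s) {k : ℕ → ℝ≥0} (hk : Monotone k)
    (hk_top : Tendsto k atTop atTop) {K : Set X} (hK : IsCompact K) :
    TendstoUniformlyOn (fun p => s.piecewise (supConv s F (k p)) F) F atTop K := by
  refine TendstoUniformlyOn.piecewise_of_inter ?_
  exact Antitone.tendstoUniformlyOn_of_forall_tendsto (hK.inter_right hs)
    (fun p => (lipschitzWith_supConv hF _).continuous.continuousOn)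
    (fun x _ => (supConv_antitone hF x).comp_monotone hk) (hFc.mono inter_subset_right)
    fun x hx => (tendsto_supConv hF hx.2 (hFc x hx.2)).comp hk_top

end SupConvolution

lemma dist_prod_mk_le {α β γ δ ε ζ : Type*} [PseudoMetricSpace α] [PseudoMetricSpace β]
    [PseudoMetricSpace γ] [PseudoMetricSpace δ] [PseudoMetricSpace ε] [PseudoMetricSpace ζ]
    (a : α) (b b' : β) (c c' : γ) (d d' : δ) (e : ε) (f : ζ) :
    dist (a, b, c, d, e, f) (a, b', c', d', e, f) ≤ dist b b' + dist c c' + dist d d' := by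
  have := dist_nonneg (x := b) (y := b')
  have := dist_nonneg (x := c) (y := c')
  have := dist_nonneg (x := d) (y := d')
  simp only [Prod.dist_eq, dist_self]
  repeat' apply max_le
  all_goals linarith

theorem monotone_lipschitz_approximation_general
    {n d : ℕ} (T : ℝ)
    (A B : Type) [MetricSpace A]
    [MetricSpace B]
    (ft : ℝ → En n → ℝ → En d → A → B → ℝ)
    (Mf : ℝ)
    (hbd : ∀ t ∈ Icc (0:ℝ) T, ∀ (x : En n) (y : ℝ) (z : En d) (α : A) (β : B),
      |ft t x y z α β| ≤ Mf)
    (hcont : ContinuousOn (fun q : ℝ × En n × ℝ × En d × A × B => ft q.1 q.2.1 q.2.2.1 q.2.2.2.1 q.2.2.2.2.1 q.2.2.2.2.2) (Icc 0 T ×ˢ (univ : Set (En n × ℝ × En d × A × B)))) :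
    ∃ fs : ℕ → ℝ → En n → ℝ → En d → A → B → ℝ,
      (∀ p, ContinuousOn (fun q : ℝ × En n × ℝ × En d × A × B => fs p q.1 q.2.1 q.2.2.1 q.2.2.2.1 q.2.2.2.2.1 q.2.2.2.2.2) (Icc 0 T ×ˢ (univ : Set (En n × ℝ × En d × A × B))))
      ∧ (∀ p, ∃ Mp, ∀ t ∈ Icc (0:ℝ) T, ∀ (x : En n) (y : ℝ) (z : En d) (α : A) (β : B),
          |fs p t x y z α β| ≤ Mp)
      ∧ (∀ p, ∃ Lp > (0:ℝ), ∀ t ∈ Icc (0:ℝ) T,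
          ∀ (x x' : En n) (y y' : ℝ) (z z' : En d) (α : A) (β : B),
          |fs p t x y z α β - fs p t x' y' z' α β|
            ≤ Lp * (‖x - x'‖ + |y - y'| + ‖z - z'‖))
      ∧ (∀ p, ∀ t ∈ Icc (0:ℝ) T, ∀ (x : En n) (y : ℝ) (z : En d) (α : A) (β : B),
          fs (p+1) t x y z α β ≤ fs p t x y z α β
          ∧ ft t x y z α β ≤ fs p t x y z α β)
      ∧ (∀ Kc : Set (ℝ × En n × ℝ × En d × A × B), IsCompact Kc →
          TendstoUniformlyOn (fun p => fun q : ℝ × En n × ℝ × En d × A × B => fs p q.1 q.2.1 q.2.2.1 q.2.2.2.1 q.2.2.2.2.1 q.2.2.2.2.2)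
            (fun q : ℝ × En n × ℝ × En d × A × B => ft q.1 q.2.1 q.2.2.1 q.2.2.2.1 q.2.2.2.2.1 q.2.2.2.2.2) atTop Kc) := by
  classical
  set S : Set (ℝ × En n × ℝ × En d × A × B) := Icc 0 T ×ˢ univ
  set F := fun q : ℝ × En n × ℝ × En d × A × B =>
    ft q.1 q.2.1 q.2.2.1 q.2.2.2.1 q.2.2.2.2.1 q.2.2.2.2.2
  have hFM : ∀ q ∈ S, |F q| ≤ Mf := fun q hq => hbd _ hq.1 _ _ _ _ _
  have hF : BddAbove (F '' S) := ⟨Mf, forall_mem_image.2 fun q hq => (abs_le.1 (hFM q hq)).2⟩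
  have hmem : ∀ {t} (x : En n) (y : ℝ) (z : En d) (α : A) (β : B), t ∈ Icc 0 T →
      (t, x, y, z, α, β) ∈ S := fun _ _ _ _ _ ht => mk_mem_prod ht (mem_univ _)
  have hk : Monotone fun p : ℕ => (p : ℝ≥0) + 1 := fun p p' h => by simpa using h
  have hk_top : Tendsto (fun p : ℕ => (p : ℝ≥0) + 1) atTop atTop :=
    tendsto_atTop_mono (fun _ => le_add_of_nonneg_right zero_le_one) tendsto_natCast_atTop_atTop
  refine ⟨fun p t x y z α β => S.piecewise (supConv S F (p + 1)) F (t, x, y, z, α, β),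
    fun p => ?_, fun p => ⟨Mf, fun t ht x y z α β => ?_⟩, fun p => ⟨(p : ℝ) + 1, by positivity,
    fun t ht x x' y y' z z' α β => ?_⟩, fun p t ht x y z α β => ?_,
    fun Kc hKc => tendstoUniformlyOn_piecewise_supConv (isClosed_Icc.prod isClosed_univ) hF hcont
      hk hk_top hKc⟩
  · exact (lipschitzWith_supConv hF _).continuous.continuousOn.congr
      fun q hq => S.piecewise_eq_of_mem _ _ hq
  · simp only [S.piecewise_eq_of_mem _ _ (hmem x y z α β ht)]
    exact abs_supConv_le hFM _ (hmem x y z α β ht)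
  · simp only [S.piecewise_eq_of_mem _ _ (hmem _ _ _ α β ht)]
    calc _ ≤ ((p : ℝ≥0) + 1 : ℝ≥0) * dist (t, x, y, z, α, β) (t, x', y', z', α, β) :=
          (lipschitzWith_supConv hF _).dist_le_mul _ _
      _ ≤ ((p : ℝ) + 1) * (‖x - x'‖ + |y - y'| + ‖z - z'‖) := by
          push_cast
          gcongr
          simpa only [dist_eq_norm, Real.norm_eq_abs] using dist_prod_mk_le t x x' y y' z z' α β
  · simp only [S.piecewise_eq_of_mem _ _ (hmem x y z α β ht)]
    exact ⟨supConv_antitone hF _ (hk p.le_succ), le_supConv hF _ (hmem x y z α β ht)⟩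

/-- Monotone Lipschitz approximation of a bounded continuous
generator vanishing for large `|y|`. -/
theorem monotone_lipschitz_approximation
    {n d : ℕ} (hn : 1 ≤ n) (hd : 1 ≤ d) (T : ℝ) (hT : 0 < T)
    (A B : Type) [MetricSpace A] [CompactSpace A] [Nonempty A]
    [MetricSpace B] [CompactSpace B] [Nonempty B]
    (ft : ℝ → En n → ℝ → En d → A → B → ℝ)
    (Mf : ℝ)
    (hbd : ∀ t ∈ Icc (0:ℝ) T, ∀ (x : En n) (y : ℝ) (z : En d) (α : A) (β : B),
      |ft t x y z α β| ≤ Mf)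
    (hcont : ContinuousOn (fun q : ℝ × En n × ℝ × En d × A × B => ft q.1 q.2.1 q.2.2.1 q.2.2.2.1 q.2.2.2.2.1 q.2.2.2.2.2) (Icc 0 T ×ˢ (univ : Set (En n × ℝ × En d × A × B))))
    (R : ℝ) (hR : 0 < R)
    (hvanish : ∀ t ∈ Icc (0:ℝ) T, ∀ (x : En n) (y : ℝ) (z : En d) (α : A) (β : B),
      R < |y| → ft t x y z α β = 0) :
    ∃ fs : ℕ → ℝ → En n → ℝ → En d → A → B → ℝ,
      (∀ p, ContinuousOn (fun q : ℝ × En n × ℝ × En d × A × B => fs p q.1 q.2.1 q.2.2.1 q.2.2.2.1 q.2.2.2.2.1 q.2.2.2.2.2) (Icc 0 T ×ˢ (univ : Set (En n × ℝ × En d × A × B))))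
      ∧ (∀ p, ∃ Mp, ∀ t ∈ Icc (0:ℝ) T, ∀ (x : En n) (y : ℝ) (z : En d) (α : A) (β : B),
          |fs p t x y z α β| ≤ Mp)
      ∧ (∀ p, ∃ Lp > (0:ℝ), ∀ t ∈ Icc (0:ℝ) T,
          ∀ (x x' : En n) (y y' : ℝ) (z z' : En d) (α : A) (β : B),
          |fs p t x y z α β - fs p t x' y' z' α β|
            ≤ Lp * (‖x - x'‖ + |y - y'| + ‖z - z'‖))
      ∧ (∀ p, ∀ t ∈ Icc (0:ℝ) T, ∀ (x : En n) (y : ℝ) (z : En d) (α : A) (β : B),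
          fs (p+1) t x y z α β ≤ fs p t x y z α β
          ∧ ft t x y z α β ≤ fs p t x y z α β)
      ∧ (∀ Kc : Set (ℝ × En n × ℝ × En d × A × B), IsCompact Kc →
          TendstoUniformlyOn (fun p => fun q : ℝ × En n × ℝ × En d × A × B => fs p q.1 q.2.1 q.2.2.1 q.2.2.2.1 q.2.2.2.2.1 q.2.2.2.2.2)
            (fun q : ℝ × En n × ℝ × En d × A × B => ft q.1 q.2.1 q.2.2.1 q.2.2.2.1 q.2.2.2.2.1 q.2.2.2.2.2) atTop Kc) :=
  monotone_lipschitz_approximation_general T A B ft Mf hbd hcont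
end
end

section
/- Logarithmic transform of subsolutions: assume (H1) and (H2), with C > 0 the constant in the quadratic growth bound for F. Define the exponentially transformed generator f by f(t,x,y,z,α,β) := 2Cy·[F(t, x, (ln y)/(2C), z/(2Cy), α, β) − |z|²/(4Cy²)] for y > 0 and f(t,x,y,z,α,β) := 0 for y ≤ 0 (f is continuous on the region y > 0). Let w : [0,T]×ℝⁿ → ℝ be a viscosity subsolution of the obstacle Isaacs equation E(f, e^{2Ch}, e^{2Ch'}, e^{2Cg}), and suppose e^{2Ch(t,x)} ≤ w(t,x) ≤ e^{2Ch'(t,x)} for all (t,x). Then u := (ln w)/(2C) is a viscosity subsolution of the equation (I⁻). -/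
open Set Filter Topology

noncomputable section

/-! Since `exp` is increasing, a test function `φ` touching `u = (ln w)/(2C)` from above at
`(t,x)` gives the test function `ψ = w(t,x) e^{2C(φ - φ(t,x))}` touching `w` from above there.
By the chain rule `ψₜ = 2Cwφₜ`, `Dψ = 2Cw Dφ` and `D²ψ = 2Cw (D²φ + 2C Dφ ⊗ Dφ)`; the term
`-|z|²/(4Cy²)` of `f` absorbs the extra quadratic term, so that `H_f` at `ψ` is `2Cw` times
`H⁻` at `φ`. Each quantity in the obstacle inequality for `w` is therefore nonpositive exactly
when its counterpart for `u` is. -/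

theorem log_div_le_iff_le_exp {c w a : ℝ} (hc : 0 < c) (hw : 0 < w) :
    Real.log w / c ≤ a ↔ w ≤ Real.exp (c * a) := by
  rw [div_le_iff₀ hc, mul_comm, Real.log_le_iff_le_exp hw]

theorem log_div_lt_iff_lt_exp {c w a : ℝ} (hc : 0 < c) (hw : 0 < w) :
    Real.log w / c < a ↔ w < Real.exp (c * a) := by
  rw [div_lt_iff₀ hc, mul_comm, Real.log_lt_iff_lt_exp hw]

theorem le_mul_exp_of_log_div_sub_le {c w w₀ a a₀ : ℝ} (hc : 0 < c) (hw : 0 < w) (hw₀ : 0 < w₀)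
    (h : Real.log w / c - a ≤ Real.log w₀ / c - a₀) : w ≤ w₀ * Real.exp (c * (a - a₀)) := by
  have hle : Real.log w / c ≤ Real.log w₀ / c + (a - a₀) := by linarith
  rwa [log_div_le_iff_le_exp hc hw, mul_add, mul_div_cancel₀ _ hc.ne', Real.exp_add,
    Real.exp_log hw₀] at hle

theorem UpperSemicontinuousOn.log_div {X : Type*} [TopologicalSpace X] {w : X → ℝ} {s : Set X}
    {c : ℝ} (hw : UpperSemicontinuousOn w s) (hpos : ∀ p ∈ s, 0 < w p) (hc : 0 < c) :
    UpperSemicontinuousOn (fun p => Real.log (w p) / c) s := by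
  intro p hp a ha
  rw [log_div_lt_iff_lt_exp hc (hpos p hp)] at ha
  filter_upwards [hw p hp _ ha, self_mem_nhdsWithin] with q hq hqs
  exact (log_div_lt_iff_lt_exp hc (hpos q hqs)).2 hq

theorem min_max_le_congr {α : Type*} [LinearOrder α] {z a b c a' b' c' : α}
    (ha : a ≤ z ↔ a' ≤ z) (hb : b ≤ z ↔ b' ≤ z) (hc : c ≤ z ↔ c' ≤ z) :
    min a (max b c) ≤ z ↔ min a' (max b' c') ≤ z := by
  simp only [min_le_iff, max_le_iff, ha, hb, hc]

theorem hasDerivAt_const_mul_exp_mul_sub (k c a r : ℝ) :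
    HasDerivAt (fun r => k * Real.exp (c * (r - a))) (c * (k * Real.exp (c * (r - a)))) r := by
  have h := (((hasDerivAt_id r).sub_const a).const_mul c).exp.const_mul k
  simp only [id, mul_one] at h
  exact h.congr_deriv (by ring)

theorem IsC12.comp {T : ℝ} {n : ℕ} {φ φt : ℝ → En n → ℝ} {Dφ : ℝ → En n → En n}
    {D2φ : ℝ → En n → Matrix (Fin n) (Fin n) ℝ} (hφ : IsC12 T φ φt Dφ D2φ)
    {g g' g'' : ℝ → ℝ} (hg : ∀ r, HasDerivAt g (g' r) r) (hg' : ∀ r, HasDerivAt g' (g'' r) r)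
    (hg'' : Continuous g'') :
    IsC12 T (fun s y => g (φ s y)) (fun s y => g' (φ s y) * φt s y)
      (fun s y => g' (φ s y) • Dφ s y)
      (fun s y => g' (φ s y) • D2φ s y + g'' (φ s y) • Matrix.vecMulVec (Dφ s y) (Dφ s y)) := by
  have hgc : Continuous g := continuous_iff_continuousAt.2 fun r => (hg r).continuousAt
  have hg'c : Continuous g' := continuous_iff_continuousAt.2 fun r => (hg' r).continuousAt
  have hvv : Continuous fun v : En n => Matrix.vecMulVec v v :=
    (PiLp.continuous_ofLp 2 _).matrix_vecMulVec (PiLp.continuous_ofLp 2 _)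
  refine ⟨hgc.comp_continuousOn hφ.cont, (hg'c.comp_continuousOn hφ.cont).mul hφ.cont_t,
    (hg'c.comp_continuousOn hφ.cont).smul hφ.cont_D,
    ((hg'c.comp_continuousOn hφ.cont).smul hφ.cont_D2).add
      ((hg''.comp_continuousOn hφ.cont).smul (hvv.comp_continuousOn hφ.cont_D)),
    fun t ht x => (hg (φ t x)).comp_hasDerivWithinAt t (hφ.deriv_t t ht x),
    fun t ht x => ?_, fun t ht x => ?_⟩
  · rw [hasGradientAt_iff_hasFDerivAt, map_smul]
    exact (hg (φ t x)).comp_hasFDerivAt x (hφ.grad_x t ht x).hasFDerivAt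
  · have hg'φ := (hg' (φ t x)).comp_hasFDerivAt x (hφ.grad_x t ht x).hasFDerivAt
    refine (hg'φ.smul (hφ.hess_x t ht x)).congr_fderiv ?_
    ext v : 1
    simp only [add_apply, smul_apply, ContinuousLinearMap.smulRight_apply,
      InnerProductSpace.toDual_apply_apply, LinearMap.coe_toContinuousLinearMap', map_add,
      map_smul, smul_eq_mul, mul_smul]
    congr 2
    ext i
    simp [Matrix.vecMulVec_mulVec, EuclideanSpace.inner_eq_star_dotProduct, dotProduct_comm,
      mul_comm]

theorem trace_mul_vecMulVec {n d : ℕ} (S : Matrix (Fin n) (Fin d) ℝ) (q : En n) :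
    Matrix.trace (S * S.transpose * Matrix.vecMulVec q q) = ‖rowMul q S‖ ^ 2 := by
  rw [Matrix.mul_vecMulVec, Matrix.trace_vecMulVec, ← Matrix.mulVec_mulVec,
    Matrix.mulVec_transpose, dotProduct_comm, Matrix.dotProduct_mulVec,
    EuclideanSpace.real_norm_sq_eq]
  simp [rowMul, dotProduct, Matrix.vecMul, sq]

theorem rowMul_smul {n d : ℕ} (c : ℝ) (q : En n) (S : Matrix (Fin n) (Fin d) ℝ) :
    rowMul (c • q) S = c • rowMul q S := by
  ext j
  simp [rowMul, Finset.mul_sum, mul_assoc]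

theorem Hinf_expGen {n d : ℕ} {A B : Type} (b : ℝ → En n → A → B → En n)
    (σm : ℝ → En n → A → B → Matrix (Fin n) (Fin d) ℝ)
    (F : ℝ → En n → ℝ → En d → A → B → ℝ) {C w : ℝ} (hC : 0 < C) (hw : 0 < w)
    (t : ℝ) (x q : En n) (X : Matrix (Fin n) (Fin n) ℝ) :
    Hinf A B b σm (expGen C F) t x w ((2 * C * w) • q)
        ((2 * C * w) • X + (2 * C * (2 * C * w)) • Matrix.vecMulVec q q)
      = 2 * C * w * Hinf A B b σm F t x (Real.log w / (2 * C)) q X := by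
  have hcw : 0 < 2 * C * w := by positivity
  unfold Hinf
  rw [Real.mul_iSup_of_nonneg hcw.le]
  refine iSup_congr fun α => ?_
  rw [Real.mul_iInf_of_nonneg hcw.le]
  refine iInf_congr fun β => ?_
  simp only [expGen, if_pos hw, rowMul_smul, smul_smul, real_inner_smul_right, Matrix.mul_smul,
    Matrix.trace_smul, Matrix.mul_add, Matrix.trace_add, trace_mul_vecMulVec, norm_smul,
    Real.norm_eq_abs, abs_of_pos hcw, smul_eq_mul]
  rw [one_div_mul_cancel hcw.ne', one_smul]
  field_simp
  ring

theorem log_transform_subsolution_general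
    {n d : ℕ}
    (T : ℝ) (hT : 0 < T)
    (A B : Type) [MetricSpace A]
    [MetricSpace B]
    (b : ℝ → En n → A → B → En n)
    (σm : ℝ → En n → A → B → Matrix (Fin n) (Fin d) ℝ)
    (F : ℝ → En n → ℝ → En d → A → B → ℝ)
    (g : En n → ℝ) (h h' : ℝ → En n → ℝ) (C : ℝ)
    (hH2 : HypH2 T C A B g h h' F)
    (w : ℝ → En n → ℝ)
    (hw : IsSubsolution T (Hinf A B b σm (expGen C F))
        (fun t x => Real.exp (2 * C * h t x)) (fun t x => Real.exp (2 * C * h' t x))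
        (fun x => Real.exp (2 * C * g x)) w)
    (hbound : ∀ t ∈ Icc (0:ℝ) T, ∀ x : En n,
      Real.exp (2 * C * h t x) ≤ w t x ∧ w t x ≤ Real.exp (2 * C * h' t x)) :
    IsSubsolution T (Hinf A B b σm F) h h' g
      (fun t x => Real.log (w t x) / (2 * C)) := by
  obtain ⟨-, -, -, -, -, -, -, -, hC, -⟩ := hH2
  have h2C : 0 < 2 * C := by positivity
  obtain ⟨husc, hterm, htest⟩ := hw
  have hwpos : ∀ t ∈ Icc 0 T, ∀ x, 0 < w t x := fun t ht x =>
    (Real.exp_pos _).trans_le (hbound t ht x).1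
  refine ⟨husc.log_div (fun p hp => hwpos p.1 hp.1 p.2) h2C,
    fun x => (log_div_le_iff_le_exp h2C (hwpos T ⟨hT.le, le_rfl⟩ x)).2 (hterm x), ?_⟩
  intro φ φt Dφ D2φ hφ t ht x hmax
  have hwx := hwpos t (Ico_subset_Icc_self ht) x
  have hψ := hφ.comp (hasDerivAt_const_mul_exp_mul_sub (w t x) (2 * C) (φ t x))
    (fun r => (hasDerivAt_const_mul_exp_mul_sub (w t x) (2 * C) (φ t x) r).const_mul (2 * C))
    (by fun_prop)
  have htouch : ∀ s ∈ Ico 0 T, ∀ y, w s y - w t x * Real.exp (2 * C * (φ s y - φ t x)) ≤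
      w t x - w t x * Real.exp (2 * C * (φ t x - φ t x)) := fun s hs y => by
    have := le_mul_exp_of_log_div_sub_le h2C (hwpos s (Ico_subset_Icc_self hs) y) hwx
      (hmax s hs y)
    simp only [sub_self, mul_zero, Real.exp_zero, mul_one]
    linarith
  have hkey := htest _ _ _ _ hψ t ht x htouch
  simp only [sub_self, mul_zero, Real.exp_zero, mul_one, Hinf_expGen b σm F hC hwx] at hkey
  refine (min_max_le_congr ?_ ?_ ?_).1 hkey
  · rw [sub_nonpos, sub_nonpos, log_div_le_iff_le_exp h2C hwx]
  · have hk : 0 < 2 * C * w t x := by positivity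
    constructor <;> intro hle <;> nlinarith
  · rw [sub_nonpos, sub_nonpos, log_div_le_iff_le_exp h2C hwx]

/-- Logarithmic transform of subsolutions: if `w` is a viscosity
subsolution of `E(f, e^{2Ch}, e^{2Ch'}, e^{2Cg})` lying between the exponential
obstacles, then `u = (ln w)/(2C)` is a viscosity subsolution of `(I⁻)`. -/
theorem log_transform_subsolution
    {n d : ℕ} (hn : 1 ≤ n) (hd : 1 ≤ d)
    (T : ℝ) (hT : 0 < T)
    (A B : Type) [MetricSpace A] [CompactSpace A] [Nonempty A]
    [MetricSpace B] [CompactSpace B] [Nonempty B]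
    (b : ℝ → En n → A → B → En n)
    (σm : ℝ → En n → A → B → Matrix (Fin n) (Fin d) ℝ)
    (F : ℝ → En n → ℝ → En d → A → B → ℝ)
    (g : En n → ℝ) (h h' : ℝ → En n → ℝ) (C : ℝ)
    (hH1 : HypH1 T A B b σm) (hH2 : HypH2 T C A B g h h' F)
    (w : ℝ → En n → ℝ)
    (hw : IsSubsolution T (Hinf A B b σm (expGen C F))
        (fun t x => Real.exp (2 * C * h t x)) (fun t x => Real.exp (2 * C * h' t x))
        (fun x => Real.exp (2 * C * g x)) w)
    (hbound : ∀ t ∈ Icc (0:ℝ) T, ∀ x : En n,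
      Real.exp (2 * C * h t x) ≤ w t x ∧ w t x ≤ Real.exp (2 * C * h' t x)) :
    IsSubsolution T (Hinf A B b σm F) h h' g
      (fun t x => Real.log (w t x) / (2 * C)) :=
  log_transform_subsolution_general T hT A B b σm F g h h' C hH2 w hw hbound
end
end
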